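/- Let X be a Grassmannian frame for R^n at angle α, with core C(X). If X is not an orthonormal basis (equivalently α > 0), then for every x ∈ C(X), the set {y ∈ C(X) : y ≠ x, |⟨x,y⟩| = α} spans R^n, and consequently |C(X)| ≥ n+1. -/

import Mathlib

open scoped RealInnerProductSpace
abbrev E (n : ℕ) := EuclideanSpace ℝ (Fin n)
noncomputable def coh {n : ℕ} (X : Set (E n)) : ℝ :=
  sSup {r : ℝ | ∃ x ∈ X, ∃ y ∈ X, x ≠ y ∧ r = |⟪x, y⟫|}
def IsUnitSet {n : ℕ} (X : Set (E n)) : Prop := ∀ x ∈ X, ‖x‖ = 1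
def Isolated {n : ℕ} (X : Set (E n)) (x : E n) : Prop :=
  ∀ y ∈ X, y ≠ x → |⟪x, y⟫| < coh X
def Isolable {n : ℕ} (X : Set (E n)) (x : E n) : Prop :=
  ∀ ε > 0, ∃ x' : E n, ‖x'‖ = 1 ∧ ‖x - x'‖ < ε ∧ ∀ y ∈ X, y ≠ x → |⟪x', y⟫| < coh X
def Grassmannian {n : ℕ} (m : ℕ) (X : Set (E n)) : Prop :=
  IsUnitSet X ∧ X.Finite ∧ X.ncard = m ∧
    ∀ Y : Set (E n), IsUnitSet Y → Y.Finite → Y.ncard = m → coh X ≤ coh Y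
noncomputable def coreSeq {n : ℕ} (X : Set (E n)) : ℕ → Set (E n)
  | 0 => X
  | k + 1 => coreSeq X k \ {x ∈ coreSeq X k | Isolable (coreSeq X k) x}
noncomputable def core {n : ℕ} (X : Set (E n)) : Set (E n) := ⋂ k, coreSeq X (k + 1)

/-!
Along the peeling `Y₀ = X ⊇ Y₁ ⊇ ⋯` each stage `Y` extends to an `m`-element unit set `W` in which
every vector of `W \ Y` is at inner product `< α` with all other vectors of `W`: an isolable vector
can be perturbed into such a position, since it already has a positive margin against the
vectors moved before it. Minimality of `X` gives `coh W ≥ α`, and the pair attaining it must lie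
in `Y`, so `coh Y = α` at every stage. In the core no vector is isolable; if the contacts of `x`
did not span, tilting `x` towards a vector `w` orthogonal to them and renormalising would lower
every contact strictly (as `‖x + t • w‖ > 1`) while keeping the other inner products below `α`,
making `x` isolable. Spanning contacts number at least `n`, and with `x` this gives `n + 1`.
-/

open Filter Topology Set

section InnerProductSpace

variable {F : Type*} [NormedAddCommGroup F] [InnerProductSpace ℝ F]

lemma exists_mem_orthogonal_ne_zero_inner_nonneg [FiniteDimensional ℝ F] {K : Submodule ℝ F}
    (hK : K ≠ ⊤) (x : F) : ∃ w ∈ Kᗮ, w ≠ 0 ∧ 0 ≤ ⟪x, w⟫ := by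
  obtain ⟨w, hwK, hw0⟩ :=
    Submodule.exists_mem_ne_zero_of_ne_bot (mt Submodule.orthogonal_eq_bot_iff.mp hK)
  rcases le_total 0 ⟪x, w⟫ with hxw | hxw
  · exact ⟨w, hwK, hw0, hxw⟩
  · exact ⟨-w, Kᗮ.neg_mem hwK, neg_ne_zero.mpr hw0, by rw [inner_neg_right]; linarith⟩

lemma one_lt_norm_add_smul {x w : F} (hx : ‖x‖ = 1) (hw : w ≠ 0) (hxw : 0 ≤ ⟪x, w⟫) {t : ℝ}
    (ht : 0 < t) : 1 < ‖x + t • w‖ := by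
  have hsq : ‖x + t • w‖ ^ 2 = 1 + 2 * t * ⟪x, w⟫ + t ^ 2 * ‖w‖ ^ 2 := by
    rw [norm_add_sq_real, hx, real_inner_smul_right, norm_smul, Real.norm_eq_abs, abs_of_pos ht]
    ring
  have hw' : 0 < ‖w‖ := norm_pos_iff.mpr hw
  rw [← one_lt_sq_iff₀ (norm_nonneg _), hsq]
  nlinarith [mul_nonneg ht.le hxw, mul_pos (pow_pos ht 2) (pow_pos hw' 2)]

lemma eventually_forall_abs_inner_lt {C : Set F} (hC : C.Finite) {x : F} {α : ℝ}
    (h : ∀ y ∈ C, |⟪x, y⟫| < α) : ∀ᶠ x' in 𝓝 x, ∀ y ∈ C, |⟪x', y⟫| < α :=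
  (eventually_all_finite hC).mpr fun y hy =>
    ((continuous_id.inner continuous_const).abs.tendsto x).eventually_lt_const (h y hy)

end InnerProductSpace

variable {n : ℕ}

def cohSet (X : Set (E n)) : Set ℝ := {r : ℝ | ∃ x ∈ X, ∃ y ∈ X, x ≠ y ∧ r = |⟪x, y⟫|}

lemma coh_eq_sSup_cohSet (X : Set (E n)) : coh X = sSup (cohSet X) := rfl

lemma Set.Finite.cohSet {X : Set (E n)} (hX : X.Finite) : (cohSet X).Finite :=
  ((hX.prod hX).image fun p => |⟪p.1, p.2⟫|).subset <| by
    rintro r ⟨x, hx, y, hy, -, rfl⟩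
    exact ⟨(x, y), ⟨hx, hy⟩, rfl⟩

lemma abs_inner_le_coh {X : Set (E n)} (hX : X.Finite) {x y : E n} (hx : x ∈ X) (hy : y ∈ X)
    (hxy : x ≠ y) : |⟪x, y⟫| ≤ coh X :=
  le_csSup hX.cohSet.bddAbove ⟨x, hx, y, hy, hxy, rfl⟩

lemma coh_nonneg (X : Set (E n)) : 0 ≤ coh X :=
  Real.sSup_nonneg <| by rintro r ⟨x, -, y, -, -, rfl⟩; exact abs_nonneg _

lemma coh_mono {X Y : Set (E n)} (hX : X.Finite) (hYX : Y ⊆ X) : coh Y ≤ coh X :=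
  Real.sSup_le (by
    rintro r ⟨x, hx, y, hy, hxy, rfl⟩
    exact abs_inner_le_coh hX (hYX hx) (hYX hy) hxy) (coh_nonneg X)

lemma coh_le_one {X : Set (E n)} (hX : IsUnitSet X) : coh X ≤ 1 :=
  Real.sSup_le (by
    rintro r ⟨x, hx, y, hy, -, rfl⟩
    simpa [hX x hx, hX y hy] using abs_real_inner_le_norm x y) zero_le_one

lemma exists_abs_inner_eq_coh {X : Set (E n)} (hX : X.Finite) (hpos : 0 < coh X) :
    ∃ x ∈ X, ∃ y ∈ X, x ≠ y ∧ |⟪x, y⟫| = coh X := by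
  have hne : (cohSet X).Nonempty := by
    by_contra h
    rw [coh_eq_sSup_cohSet, Set.not_nonempty_iff_eq_empty.mp h, Real.sSup_empty] at hpos
    exact hpos.false
  obtain ⟨x, hx, y, hy, hxy, h⟩ := hne.csSup_mem hX.cohSet
  exact ⟨x, hx, y, hy, hxy, h.symm⟩

def IsolableBelow (α : ℝ) (Y : Set (E n)) (x : E n) : Prop :=
  ∃ᶠ x' in 𝓝 x, ‖x'‖ = 1 ∧ ∀ y ∈ Y, y ≠ x → |⟪x', y⟫| < α

lemma isolable_iff_isolableBelow {Y : Set (E n)} {x : E n} :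
    Isolable Y x ↔ IsolableBelow (coh Y) Y x := by
  simp only [Isolable, IsolableBelow, Metric.nhds_basis_ball.frequently_iff, Metric.mem_ball,
    dist_eq_norm', gt_iff_lt]
  exact forall₂_congr fun ε _ => exists_congr fun x' => and_left_comm

lemma IsolableBelow.mono {α : ℝ} {Y Z : Set (E n)} {x : E n} (h : IsolableBelow α Y x)
    (hZY : Z ⊆ Y) : IsolableBelow α Z x :=
  Frequently.mono h fun _ hx' => ⟨hx'.1, fun y hy => hx'.2 y (hZY hy)⟩

lemma isolableBelow_of_span_ne_top {C : Set (E n)} (hC : C.Finite) {x : E n} (hx : ‖x‖ = 1)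
    {α : ℝ} (hα : 0 < α) (hle : ∀ y ∈ C, y ≠ x → |⟪x, y⟫| ≤ α)
    (hspan : Submodule.span ℝ {y | y ∈ C ∧ y ≠ x ∧ |⟪x, y⟫| = α} ≠ ⊤) :
    IsolableBelow α C x := by
  set S := {y | y ∈ C ∧ y ≠ x ∧ |⟪x, y⟫| = α}
  obtain ⟨w, hwS, hw0, hxw⟩ := exists_mem_orthogonal_ne_zero_inner_nonneg hspan x
  set f : ℝ → E n := fun t => ‖x + t • w‖⁻¹ • (x + t • w)
  have hf : Tendsto f (𝓝[>] 0) (𝓝 x) := by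
    have hc : Continuous fun t : ℝ => x + t • w := by fun_prop
    have hf0 : f 0 = x := by simp [f, hx]
    have hcont : ContinuousAt f 0 :=
      (hc.norm.continuousAt.inv₀ (by simp [hx])).smul hc.continuousAt
    exact hf0 ▸ hcont.tendsto.mono_left nhdsWithin_le_nhds
  have hfar : ∀ᶠ x' in 𝓝 x, ∀ y ∈ C \ insert x S, |⟪x', y⟫| < α :=
    eventually_forall_abs_inner_lt hC.sdiff fun y ⟨hyC, hy⟩ =>
      (hle y hyC fun h => hy (.inl h)).lt_of_ne fun h => hy (.inr ⟨hyC, fun h' => hy (.inl h'), h⟩)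
  refine hf.frequently (Eventually.frequently ?_)
  filter_upwards [hf.eventually hfar, self_mem_nhdsWithin] with t hfar_t (ht : 0 < t)
  have hN := one_lt_norm_add_smul hx hw0 hxw ht
  refine ⟨norm_smul_inv_norm (ne_zero_of_norm_ne_zero (by linarith)), fun y hy hyx => ?_⟩
  by_cases hyS : y ∈ S
  · have hwy : ⟪w, y⟫ = 0 := Submodule.inner_left_of_mem_orthogonal (Submodule.subset_span hyS) hwS
    rw [real_inner_smul_left, inner_add_left, real_inner_smul_left, hwy, mul_zero, add_zero,
      abs_mul, abs_inv, abs_norm, hyS.2.2]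
    exact (inv_mul_lt_iff₀ (by linarith)).mpr (by nlinarith)
  · exact hfar_t y ⟨hy, by rintro (h | h) <;> tauto⟩

structure LooseExtension (α : ℝ) (Y W : Set (E n)) : Prop where
  subset : Y ⊆ W
  unit : IsUnitSet W
  finite : W.Finite
  loose : ∀ r ∈ W \ Y, ∀ w ∈ W, w ≠ r → |⟪r, w⟫| < α

namespace LooseExtension

variable {α : ℝ} {Y W : Set (E n)}

lemma refl (hu : IsUnitSet Y) (hfin : Y.Finite) : LooseExtension α Y Y :=
  ⟨subset_rfl, hu, hfin, by simp⟩

lemma le_coh (h : LooseExtension α Y W) (hpos : 0 < α) (hW : α ≤ coh W) : α ≤ coh Y := by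
  obtain ⟨x, hx, y, hy, hxy, hcoh⟩ := exists_abs_inner_eq_coh h.finite (hpos.trans_le hW)
  have hxY : x ∈ Y := by
    by_contra hxY
    exact (h.loose x ⟨hx, hxY⟩ y hy hxy.symm).not_ge (hcoh ▸ hW)
  have hyY : y ∈ Y := by
    by_contra hyY
    exact (h.loose y ⟨hy, hyY⟩ x hx hxy).not_ge (real_inner_comm x y ▸ hcoh ▸ hW)
  exact (hcoh ▸ hW).trans (abs_inner_le_coh (h.finite.subset h.subset) hxY hyY hxy)

lemma exists_replace (h : LooseExtension α Y W) (hα1 : α ≤ 1) {a : E n} (ha : a ∈ Y)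
    (hiso : IsolableBelow α Y a) :
    ∃ W', LooseExtension α (Y \ {a}) W' ∧ W'.ncard = W.ncard := by
  have hfar : ∀ᶠ a' in 𝓝 a, ∀ r ∈ W \ Y, |⟪a', r⟫| < α :=
    eventually_forall_abs_inner_lt h.finite.sdiff fun r hr =>
      real_inner_comm a r ▸ h.loose r hr a (h.subset ha) fun h' => hr.2 (h' ▸ ha)
  obtain ⟨a', ⟨ha'1, ha'Y⟩, ha'far⟩ := (hiso.and_eventually hfar).exists
  have ha'W : ∀ w ∈ W \ {a}, |⟪a', w⟫| < α := by
    rintro w ⟨hwW, hwa⟩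
    by_cases hwY : w ∈ Y
    · exact ha'Y w hwY hwa
    · exact ha'far w ⟨hwW, hwY⟩
  -- `|⟪a', a'⟫| = 1 ≥ α`, so `a'` does not already lie in `W \ {a}`.
  have ha'_notMem : a' ∉ W \ {a} := fun hmem => by
    have := ha'W a' hmem
    rw [real_inner_self_eq_norm_sq, ha'1, one_pow, abs_one] at this
    linarith
  refine ⟨insert a' (W \ {a}), ⟨?_, ?_, h.finite.sdiff.insert a', ?_⟩, ?_⟩
  · exact (sdiff_subset_sdiff_left h.subset).trans (subset_insert _ _)
  · rintro x (rfl | hx)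
    exacts [ha'1, h.unit x hx.1]
  · rintro r ⟨hr, hrY⟩ w hw hwr
    obtain rfl | ⟨hrW, hra⟩ := hr
    · obtain rfl | hw := hw
      exacts [absurd rfl hwr, ha'W w hw]
    · have hrY' : r ∉ Y := fun h' => hrY ⟨h', hra⟩
      obtain rfl | ⟨hwW, -⟩ := hw
      exacts [real_inner_comm w r ▸ ha'W r ⟨hrW, hra⟩, h.loose r ⟨hrW, hrY'⟩ w hwW hwr]
  · rw [ncard_insert_of_notMem ha'_notMem h.finite.sdiff, ncard_sdiff_singleton_add_one
      (h.subset ha) h.finite]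

lemma exists_diff (h : LooseExtension α Y W) (hα1 : α ≤ 1) {I : Set (E n)} (hI : I.Finite)
    (hIY : I ⊆ Y) (hiso : ∀ a ∈ I, IsolableBelow α Y a) :
    ∃ W', LooseExtension α (Y \ I) W' ∧ W'.ncard = W.ncard := by
  induction I, hI using Set.Finite.induction_on generalizing Y W with
  | empty => exact ⟨W, by simpa using h, rfl⟩
  | @insert a I haI hI ih =>
    obtain ⟨W₁, h₁, hW₁⟩ := h.exists_replace hα1 (hIY (mem_insert a I)) (hiso a (mem_insert a I))
    obtain ⟨W₂, h₂, hW₂⟩ := ih h₁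
      (fun b hb => ⟨hIY (mem_insert_of_mem a hb), fun hba => haI (hba ▸ hb)⟩)
      (fun b hb => (hiso b (mem_insert_of_mem a hb)).mono sdiff_subset)
    rw [sdiff_sdiff, singleton_union] at h₂
    exact ⟨W₂, h₂, hW₂.trans hW₁⟩

lemma exists_diff_isolable (h : LooseExtension α Y W) (hα1 : α ≤ 1) (hcoh : coh Y = α) :
    ∃ W', LooseExtension α (Y \ {x ∈ Y | Isolable Y x}) W' ∧ W'.ncard = W.ncard :=
  h.exists_diff hα1 ((h.finite.subset h.subset).subset (sep_subset _ _)) (sep_subset _ _)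
    fun _ ha => hcoh ▸ isolable_iff_isolableBelow.mp ha.2

end LooseExtension

lemma coreSeq_invariant {m : ℕ} {X : Set (E n)} (hX : Grassmannian m X) (hpos : 0 < coh X)
    (k : ℕ) :
    coh (coreSeq X k) = coh X ∧ ∃ W, LooseExtension (coh X) (coreSeq X k) W ∧ W.ncard = m := by
  obtain ⟨hu, hfin, hcard, hmin⟩ := hX
  induction k with
  | zero => exact ⟨rfl, X, .refl hu hfin, hcard⟩
  | succ k ih =>
    obtain ⟨hcoh, W, hW, hWm⟩ := ih
    obtain ⟨W', hW', hW'm⟩ := hW.exists_diff_isolable (coh_le_one hu) hcoh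
    refine ⟨le_antisymm ?_ ?_, W', hW', hW'm.trans hWm⟩
    · exact hcoh ▸ coh_mono (hW.finite.subset hW.subset) sdiff_subset
    · exact hW'.le_coh hpos (hmin W' hW'.unit hW'.finite (hW'm.trans hWm))

lemma coreSeq_antitone (X : Set (E n)) : Antitone (coreSeq X) :=
  antitone_nat_of_succ_le fun _ => sdiff_subset

lemma exists_core_eq_coreSeq {X : Set (E n)} (hX : X.Finite) :
    ∃ K, core X = coreSeq X K ∧ coreSeq X (K + 1) = coreSeq X K := by
  set card := fun k => (coreSeq X k).ncard
  set K := Function.argmin card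
  have hfix : coreSeq X (K + 1) = coreSeq X K :=
    eq_of_subset_of_ncard_le sdiff_subset (Function.argmin_le card (K + 1))
      (hX.subset (coreSeq_antitone X K.zero_le))
  have hconst : ∀ j, K ≤ j → coreSeq X j = coreSeq X K := by
    intro j hj
    induction j, hj using Nat.le_induction with
    | base => rfl
    | succ j _ ih => rw [← hfix]; exact congrArg (fun Y => Y \ {x ∈ Y | Isolable Y x}) ih
  refine ⟨K, subset_antisymm ((iInter_subset _ K).trans hfix.subset) ?_, hfix⟩
  refine subset_iInter fun k => ?_
  rw [← hconst (max K (k + 1)) (le_max_left _ _)]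
  exact coreSeq_antitone X (le_max_right _ _)

lemma core_subset (X : Set (E n)) : core X ⊆ X :=
  iInter_subset_of_subset 0 sdiff_subset

lemma coh_core {m : ℕ} {X : Set (E n)} (hX : Grassmannian m X) (hpos : 0 < coh X) :
    coh (core X) = coh X := by
  obtain ⟨K, hK, -⟩ := exists_core_eq_coreSeq hX.2.1
  exact hK ▸ (coreSeq_invariant hX hpos K).1

lemma not_isolable_core {X : Set (E n)} (hX : X.Finite) {x : E n} (hx : x ∈ core X) :
    ¬ Isolable (core X) x := by
  obtain ⟨K, hK, hfix⟩ := exists_core_eq_coreSeq hX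
  rw [hK] at hx ⊢
  exact fun hiso => (hfix.symm ▸ hx : x ∈ coreSeq X (K + 1)).2 ⟨hx, hiso⟩

lemma finrank_le_ncard_of_span_eq_top {K V : Type*} [DivisionRing K] [AddCommGroup V]
    [Module K V] {S : Set V} (hS : S.Finite) (hspan : Submodule.span K S = ⊤) :
    Module.finrank K V ≤ S.ncard := by
  lift S to Finset V using hS
  have := finrank_span_finset_le_card (R := K) S
  rwa [Set.finrank, hspan, finrank_top, ← ncard_coe_finset] at this

theorem core_spanning {n m : ℕ} (X : Set (E n))
    (hX : Grassmannian m X) (α : ℝ) (hα : coh X = α) (hpos : 0 < α) :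
    (∀ x ∈ core X,
      Submodule.span ℝ {y | y ∈ core X ∧ y ≠ x ∧ |⟪x, y⟫| = α} = ⊤) ∧
    n + 1 ≤ (core X).ncard := by
  subst hα
  have hfin : (core X).Finite := hX.2.1.subset (core_subset X)
  have hcoh : coh (core X) = coh X := coh_core hX hpos
  have hspan : ∀ x ∈ core X,
      Submodule.span ℝ {y | y ∈ core X ∧ y ≠ x ∧ |⟪x, y⟫| = coh X} = ⊤ := by
    intro x hx
    by_contra hne
    refine not_isolable_core hX.2.1 hx (isolable_iff_isolableBelow.mpr (hcoh ▸ ?_))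
    exact isolableBelow_of_span_ne_top hfin (hX.1 x (core_subset X hx)) hpos
      (fun y hy hyx => hcoh ▸ abs_inner_le_coh hfin hx hy hyx.symm) hne
  refine ⟨hspan, ?_⟩
  obtain ⟨x, hx, -⟩ := exists_abs_inner_eq_coh hfin (hcoh ▸ hpos)
  set S := {y | y ∈ core X ∧ y ≠ x ∧ |⟪x, y⟫| = coh X}
  have hSfin : S.Finite := hfin.subset fun y hy => hy.1
  have hnS : n ≤ S.ncard := by
    simpa using finrank_le_ncard_of_span_eq_top hSfin (hspan x hx)
  calc n + 1 ≤ S.ncard + 1 := by omega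
    _ = (insert x S).ncard := (ncard_insert_of_notMem (fun h => h.2.1 rfl) hSfin).symm
    _ ≤ (core X).ncard := ncard_le_ncard (insert_subset hx fun y hy => hy.1) hfin
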